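/- For n ≥ 1, let S_0(z) = ∑_{i=1}^n c_i (z^{2i−1} − z^{1−2i})/(2i−1) with c_i = (−1)^{i+1}(n−1)! n! / ((2i−1)(n−i)!(n+i−1)!), and b = 2^{4n−1}/(n·C(2n,n)²). Then z = 1 is a critical point of order 2n of the action S(z) = S_0(z) − b log z: that is, (z d/dz)^k [S_0(z) − b log z] vanishes at z = 1 for all 1 ≤ k ≤ 2n. -/

import Mathlib

open scoped BigOperators Nat

/-- The odd multicritical action `S₀(z) = ∑_{i=1}^n cᵢ (z^{2i-1} - z^{1-2i})/(2i-1)` with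
`cᵢ = (-1)^{i+1} (n-1)! n! / ((2i-1)(n-i)!(n+i-1)!)`. -/
noncomputable def S0 (n : ℕ) (z : ℝ) : ℝ :=
  ∑ i ∈ Finset.Icc 1 n,
    ((-1 : ℝ) ^ (i + 1) * ((n - 1).factorial : ℝ) * (n.factorial : ℝ) /
        (((2 * i - 1 : ℕ) : ℝ) * ((n - i).factorial : ℝ) * ((n + i - 1).factorial : ℝ))) *
      (z ^ (2 * i - 1) - z⁻¹ ^ (2 * i - 1)) / ((2 * i - 1 : ℕ) : ℝ)

/-- The endpoint constant `b = 2^{4n-1}/(n C(2n,n)²)`. -/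
noncomputable def bConst (n : ℕ) : ℝ :=
  2 ^ (4 * n - 1) / ((n : ℝ) * ((Nat.choose (2 * n) n : ℝ)) ^ 2)

/-!
With `u = log z` and `N = 2n - 1`, pairing `z^{±(2i-1)}` turns `S₀(eᵘ)` into a constant times
`∑_{t=0}^{N} (-1)^{N-t} C(N,t) e^{2 x_t u} / x_t²` over the half-integers `x_t = t - N/2`, i.e. an
`N`-th forward difference. Its `k`-th derivative at `u = 0` is `2^k` times the `N`-th forward
difference of `x ↦ x^{k-2}`, which vanishes for `2 ≤ k ≤ 2n`. For `k = 1` it is twice the `N`-th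
forward difference of `x ↦ x⁻¹`, namely `2 (-1)^N N! / ∏ x_t`, and the product of the half-integers
`±1/2, …, ±N/2` is a central binomial coefficient; this produces exactly `b`.
-/

open Finset Nat Real fwdDiff

theorem fwdDiff_iter_one_apply {R : Type*} [CommRing R] (f : R → R) (N : ℕ) (x : R) :
    (Δ_[1])^[N] f x = ∑ t ∈ range (N + 1), (-1) ^ (N - t) * N.choose t * f (x + t) := by
  simp [fwdDiff_iter_eq_sum_shift, zsmul_eq_mul]

theorem sum_range_choose_mul_add_pow_eq_zero {R : Type*} [CommRing R] {N j : ℕ} (h : j < N)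
    (x : R) : ∑ t ∈ range (N + 1), (-1) ^ (N - t) * N.choose t * (x + t) ^ j = 0 := by
  rw [← fwdDiff_iter_one_apply (· ^ j), fwdDiff_iter_pow_eq_zero_of_lt h, Pi.zero_apply]

theorem fwdDiff_iter_inv_apply {K : Type*} [Field K] (N : ℕ) (x : K)
    (hx : ∀ t ≤ N, x + t ≠ 0) :
    (Δ_[1])^[N] (·⁻¹) x = (-1) ^ N * N ! / ∏ t ∈ range (N + 1), (x + t) := by
  induction N generalizing x with
  | zero => simp
  | succ N ih =>
    have hx1 : ∀ t ≤ N, x + 1 + t ≠ 0 := fun t ht => by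
      simpa [add_assoc, add_comm (1 : K)] using hx (t + 1) (by omega)
    have h0 : x ≠ 0 := by simpa using hx 0 (by omega)
    have hP : ∏ t ∈ range (N + 1), (x + t) ≠ 0 :=
      prod_ne_zero_iff.mpr fun t ht => hx t (by simp at ht; omega)
    have hP1 : ∏ t ∈ range (N + 1), (x + 1 + t) ≠ 0 :=
      prod_ne_zero_iff.mpr fun t ht => hx1 t (by simp at ht; omega)
    have hL : ∏ t ∈ range (N + 2), (x + t) = x * ∏ t ∈ range (N + 1), (x + 1 + t) := by
      rw [prod_range_succ']
      push_cast
      simp only [add_assoc, add_comm (1 : K), add_zero, mul_comm]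
    have hR : ∏ t ∈ range (N + 2), (x + t) = (∏ t ∈ range (N + 1), (x + t)) * (x + (N + 1)) := by
      rw [prod_range_succ]
      push_cast
      ring
    rw [Function.iterate_succ_apply', fwdDiff, ih (x + 1) hx1, ih x fun t ht => hx t (by omega),
      div_sub_div _ _ hP1 hP, div_eq_div_iff (mul_ne_zero hP1 hP) (hL ▸ mul_ne_zero h0 hP1)]
    push_cast [factorial_succ, pow_succ]
    linear_combination (-1) ^ N * (N ! : K) * ((∏ t ∈ range (N + 1), (x + t)) * hL
      - (∏ t ∈ range (N + 1), (x + 1 + t)) * hR)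

theorem sum_range_choose_mul_add_inv {K : Type*} [Field K] (N : ℕ) (x : K)
    (hx : ∀ t ≤ N, x + t ≠ 0) :
    ∑ t ∈ range (N + 1), (-1) ^ (N - t) * N.choose t * (x + t)⁻¹ =
      (-1) ^ N * N ! / ∏ t ∈ range (N + 1), (x + t) := by
  rw [← fwdDiff_iter_one_apply, fwdDiff_iter_inv_apply N x hx]

theorem sum_range_add_self_eq_sum_reflect_add {M : Type*} [AddCommMonoid M] (g : ℕ → M)
    (k : ℕ) : ∑ t ∈ range (k + k), g t = ∑ i ∈ range k, (g (k - 1 - i) + g (k + i)) := by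
  rw [sum_range_add, sum_add_distrib, sum_range_reflect]

theorem iteratedDeriv_sum_mul_exp_sub_mul_zero {ι : Type*} (s : Finset ι) (a r : ι → ℝ) (b : ℝ)
    (k : ℕ) : iteratedDeriv k (fun u => ∑ i ∈ s, a i * exp (r i * u) - b * u) 0 =
      ∑ i ∈ s, a i * r i ^ k - if k = 1 then b else 0 := by
  rw [iteratedDeriv_fun_sub (by fun_prop) (by fun_prop), iteratedDeriv_fun_sum (by fun_prop),
    iteratedDeriv_const_mul_field b (fun u => u), iteratedDeriv_fun_id_zero]
  simp [iteratedDeriv_const_mul_field]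

/-- For `t < 2n` these are the half-integers `±1/2, ±3/2, …, ±(2n-1)/2`. -/
noncomputable def halfNode (n t : ℕ) : ℝ := -(2 * n - 1) / 2 + t

noncomputable def expWeight (n t : ℕ) : ℝ :=
  (-1) ^ (2 * n - 1 - t) * (2 * n - 1).choose t / halfNode n t ^ 2

theorem halfNode_ne_zero (n t : ℕ) : halfNode n t ≠ 0 := by
  intro h
  have hreal : ((2 * t + 1 : ℕ) : ℝ) = (2 * n : ℕ) := by
    simp only [halfNode] at h; push_cast; linarith
  have : 2 * t + 1 = 2 * n := by exact_mod_cast hreal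
  omega

theorem halfNode_succ_succ (n t : ℕ) : halfNode (n + 1) (t + 1) = halfNode n t := by
  simp only [halfNode]; push_cast; ring

theorem prod_halfNode (n : ℕ) :
    ∏ t ∈ range (2 * n), halfNode n t = (-1) ^ n * (centralBinom n * n ! / 4 ^ n) ^ 2 := by
  induction n with
  | zero => simp
  | succ n ih =>
    have hcb : ((n + 1 : ℕ) : ℝ) * centralBinom (n + 1) = 2 * (2 * n + 1) * centralBinom n := by
      exact_mod_cast succ_mul_centralBinom_succ n
    rw [show 2 * (n + 1) = 2 * n + 1 + 1 by ring, prod_range_succ', prod_range_succ]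
    simp only [halfNode_succ_succ, ih]
    simp only [halfNode, factorial_succ]
    push_cast at hcb ⊢
    field_simp
    linear_combination (-(4 ^ n) ^ 2 * 4 * (-1) ^ (n + 1) *
      ((n + 1) * (centralBinom (n + 1) : ℝ) + 2 * (2 * n + 1) * centralBinom n)) * hcb

noncomputable def expPrefactor (n : ℕ) : ℝ :=
  (-1) ^ (n + 1) * ((n - 1)! * n ! / (4 * (2 * n - 1)!))

theorem S0_exp (n : ℕ) (u : ℝ) :
    S0 n (exp u) =
      expPrefactor n * ∑ t ∈ range (2 * n), expWeight n t * exp (2 * halfNode n t * u) := by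
  rcases n with _ | m
  · simp [S0]
  rw [S0, ← Ico_add_one_right_eq_Icc, sum_Ico_eq_sum_range, two_mul,
    sum_range_add_self_eq_sum_reflect_add, expPrefactor, mul_sum, add_tsub_cancel_right]
  -- the term `i + 1` of `S₀` pairs the nodes `t = n - 1 - i` and `t = n + i`, i.e. `∓(2i+1)/2`
  refine sum_congr rfl fun i hi => ?_
  obtain ⟨d, rfl⟩ := Nat.exists_eq_add_of_le (Nat.lt_succ_iff.mp (mem_range.mp hi))
  simp only [expWeight, show 2 * (1 + i) - 1 = 2 * i + 1 by omega, add_tsub_cancel_right,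
    show i + d + 1 - (1 + i) = d by omega, show i + d + 1 + (1 + i) - 1 = i + d + 1 + i by omega,
    show 2 * (i + d + 1) - 1 = 2 * (i + d) + 1 by omega, add_tsub_cancel_left,
    show 2 * (i + d) + 1 - d = i + d + 1 + i by omega,
    show 2 * (i + d) + 1 - (i + d + 1 + i) = d by omega]
  have hneg : halfNode (i + d + 1) d = -(2 * i + 1) / 2 := by
    simp only [halfNode]; push_cast; ring
  have hpos : halfNode (i + d + 1) (i + d + 1 + i) = (2 * i + 1) / 2 := by
    simp only [halfNode]; push_cast; ring
  have hchoose :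
      ((2 * (i + d) + 1).choose d : ℝ) = (2 * (i + d) + 1)! / (d ! * (i + d + 1 + i)!) := by
    rw [Nat.cast_choose ℝ (by omega), show 2 * (i + d) + 1 - d = i + d + 1 + i by omega]
  have hsymm : (2 * (i + d) + 1).choose (i + d + 1 + i) = (2 * (i + d) + 1).choose d :=
    Nat.choose_symm_of_eq_add (by ring)
  rw [hneg, hpos, hsymm, hchoose, ← exp_nat_mul, ← exp_neg, ← exp_nat_mul]
  push_cast
  field_simp
  ring_nf
  norm_num [pow_mul']

theorem sum_expWeight_mul_pow_eq_zero {n k : ℕ} (hk1 : 2 ≤ k) (hk2 : k ≤ 2 * n) :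
    ∑ t ∈ range (2 * n), expWeight n t * (2 * halfNode n t) ^ k = 0 := by
  obtain ⟨N, hN⟩ : ∃ N, 2 * n = N + 1 := ⟨2 * n - 1, by omega⟩
  obtain ⟨j, rfl⟩ : ∃ j, k = j + 2 := ⟨k - 2, by omega⟩
  have hterm : ∀ t, expWeight n t * (2 * halfNode n t) ^ (j + 2) =
      2 ^ (j + 2) * ((-1) ^ (N - t) * N.choose t * halfNode n t ^ j) := by
    intro t
    rw [expWeight, show 2 * n - 1 = N by omega]
    field_simp [halfNode_ne_zero]
    ring
  rw [sum_congr rfl fun t _ => hterm t, ← mul_sum, hN]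
  exact mul_eq_zero_of_right _ (sum_range_choose_mul_add_pow_eq_zero (by omega) _)

theorem expPrefactor_mul_sum_expWeight_mul_halfNode {n : ℕ} (hn : 1 ≤ n) :
    expPrefactor n * ∑ t ∈ range (2 * n), expWeight n t * (2 * halfNode n t) = bConst n := by
  obtain ⟨m, rfl⟩ : ∃ m, n = m + 1 := ⟨n - 1, by omega⟩
  have hterm : ∀ t, expWeight (m + 1) t * (2 * halfNode (m + 1) t) =
      2 * ((-1) ^ (2 * m + 1 - t) * (2 * m + 1).choose t * (halfNode (m + 1) t)⁻¹) := by
    intro t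
    rw [expWeight, show 2 * (m + 1) - 1 = 2 * m + 1 by omega]
    field_simp [halfNode_ne_zero]
  rw [sum_congr rfl fun t _ => hterm t, ← mul_sum, show 2 * (m + 1) = 2 * m + 1 + 1 by ring]
  have hsum : ∑ t ∈ range (2 * m + 1 + 1),
      (-1) ^ (2 * m + 1 - t) * (2 * m + 1).choose t * (halfNode (m + 1) t)⁻¹ =
        (-1) ^ (2 * m + 1) * (2 * m + 1)! / ∏ t ∈ range (2 * m + 1 + 1), halfNode (m + 1) t :=
    sum_range_choose_mul_add_inv _ _ fun t _ => halfNode_ne_zero (m + 1) t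
  rw [hsum, ← show 2 * (m + 1) = 2 * m + 1 + 1 by ring, prod_halfNode, expPrefactor, bConst,
    ← centralBinom_eq_two_mul_choose, add_tsub_cancel_right,
    show 2 * (m + 1) - 1 = 2 * m + 1 by omega, show 4 * (m + 1) - 1 = 4 * m + 3 by omega,
    factorial_succ m]
  push_cast
  field_simp
  ring_nf
  norm_num [pow_mul']

/-- Writing `z = e^u`, the Euler derivative `(z d/dz)^k` at `z = 1` is the `k`-th derivative in
`u` at `u = 0`. -/
theorem multicritical_action_critical (n : ℕ) (hn : 1 ≤ n) (k : ℕ) (hk1 : 1 ≤ k)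
    (hk2 : k ≤ 2 * n) :
    iteratedDeriv k (fun u : ℝ => S0 n (Real.exp u) - bConst n * u) 0 = 0 := by
  have hexp : (fun u => S0 n (exp u) - bConst n * u) = fun u =>
      ∑ t ∈ range (2 * n), expPrefactor n * expWeight n t * exp (2 * halfNode n t * u) -
        bConst n * u := by
    funext u
    simp only [S0_exp, mul_sum, mul_assoc]
  rw [hexp, iteratedDeriv_sum_mul_exp_sub_mul_zero]
  simp only [mul_assoc, ← mul_sum]
  rcases eq_or_lt_of_le hk1 with rfl | hk
  · simp only [if_pos, pow_one]
    rw [expPrefactor_mul_sum_expWeight_mul_halfNode hn, sub_self]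
  · rw [if_neg hk.ne', sum_expWeight_mul_pow_eq_zero hk hk2, mul_zero, sub_zero]
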